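/- arXiv:1905.13078 — 2 statements merged into one kernel-verified Lean document; each statement's English description precedes it below -/
import Mathlib

section
/- Let 𝔥 be the Lie algebra on ℝ⁷ with structure equations de¹ = 0, de² = 0, de³ = −e³⁷, de⁴ = e⁴⁷, de⁵ = 2 e¹⁴ + e⁵⁷, de⁶ = −2 e²⁴ + e⁶⁷, de⁷ = 0, let φ = e¹²⁷ + e³⁴⁷ + e⁵⁶⁷ + e¹³⁵ − e¹⁴⁶ − e²³⁶ − e²⁴⁵, and let τ = 2 e¹² + 2 e³⁴ − 4 e⁵⁶. Then the diagonal endomorphism D = diag(0, 0, −4, 4, 4, 4, 0) (with respect to e₁,…,e₇) is a derivation of 𝔥, and there exists a derivation D̃ of 𝔥 such that dτ = D̃.φ; i.e., φ is a steady algebraic Laplacian soliton (λ = 0) on 𝔥. -/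
/-!
Common framework: unbundled exterior forms on ℝ⁷, wedge product, interior product,
Chevalley–Eilenberg differential of a Lie bracket, induced inner products on forms,
derived series, and the Lie algebras / G₂-structures from the paper
"Laplacian flow solitons on non-solvable Lie groups" (Fino–Raffero).
-/

open scoped BigOperators

namespace G2Solitons

/-- The underlying vector space ℝ⁷. -/
abbrev V7 : Type := Fin 7 → ℝ

/-- Unbundled `k`-forms: real-valued functions of `k` vectors of ℝ⁷. -/
abbrev Form (k : ℕ) : Type := (Fin k → V7) → ℝ

/-- Standard basis of ℝ⁷. -/
def stdB (i : Fin 7) : V7 := fun j => if j = i then 1 else 0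

/-- The basic `k`-form `e^{i₁} ∧ ⋯ ∧ e^{i_k}` (determinant convention, 0-indexed). -/
def eB {k : ℕ} (idx : Fin k → Fin 7) : Form k :=
  fun v => Matrix.det (Matrix.of fun a b : Fin k => v a (idx b))

/-- Wedge product of a `p`-form and a `q`-form (convention
`(α∧β)(v) = (p!q!)⁻¹ ∑_σ sgn σ · α(v∘σ|_{first p}) β(v∘σ|_{last q})`). -/
noncomputable def wedge {p q : ℕ} (α : Form p) (β : Form q) : Form (p + q) := fun v =>
  ((p.factorial * q.factorial : ℕ) : ℝ)⁻¹ *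
    ∑ σ : Equiv.Perm (Fin (p + q)),
      ((Equiv.Perm.sign σ : ℤ) : ℝ) *
        (α (fun i => v (σ (Fin.castAdd q i))) * β (fun j => v (σ (Fin.natAdd p j))))

/-- Interior product of a vector with a `(k+1)`-form. -/
def iprod {k : ℕ} (u : V7) (α : Form (k + 1)) : Form k := fun v => α (Fin.cons u v)

/-- Chevalley–Eilenberg differential of a `(k+1)`-form with respect to a bracket:
`(dα)(x₀,…,x_{k+1}) = ∑_{i<j} (-1)^{i+j} α([xᵢ,xⱼ], x₀,…,x̂ᵢ,…,x̂ⱼ,…,x_{k+1})`. -/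
def dCE {k : ℕ} (br : V7 → V7 → V7) (α : Form (k + 1)) : Form (k + 2) := fun v =>
  ∑ i : Fin (k + 2), ∑ j : Fin (k + 2),
    if (i : ℕ) < (j : ℕ) then
      (-1 : ℝ) ^ ((i : ℕ) + (j : ℕ)) *
        α (Fin.cons (br (v i) (v j)) fun l : Fin k =>
            if (l : ℕ) < (i : ℕ) then v ⟨(l : ℕ), by omega⟩
            else if (l : ℕ) + 1 < (j : ℕ) then v ⟨(l : ℕ) + 1, by omega⟩
            else v ⟨(l : ℕ) + 2, by omega⟩)
    else 0

/-- Inner product on `k`-forms induced by the diagonal metric `g = ∑ᵢ c i (e^i)²`,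
determined by declaring `{(c i₁ ⋯ c i_k)^{-1/2} e^{i₁⋯i_k} : i₁ < ⋯ < i_k}` orthonormal. -/
noncomputable def formInner (c : Fin 7 → ℝ) {k : ℕ} (α β : Form k) : ℝ :=
  ((k.factorial : ℕ) : ℝ)⁻¹ *
    ∑ f : Fin k → Fin 7,
      (∏ i, c (f i))⁻¹ * (α (fun i => stdB (f i)) * β (fun i => stdB (f i)))

/-- Natural action of an endomorphism `D` on a `k`-form:
`(D.α)(v₁,…,v_k) = ∑ᵢ α(v₁,…,D vᵢ,…,v_k)`. -/
def actD {k : ℕ} (D : V7 → V7) (α : Form k) : Form k := fun v =>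
  ∑ i : Fin k, α (Function.update v i (D (v i)))

/-- The Jacobi identity for a bilinear bracket. -/
def Jacobi (br : V7 → V7 → V7) : Prop :=
  ∀ x y z : V7, br (br x y) z + br (br y z) x + br (br z x) y = 0

/-- Unimodularity: `tr (ad x) = 0` for all `x`. -/
def Unimodular (br : V7 → V7 → V7) : Prop :=
  ∀ x : V7, ∑ i : Fin 7, br x (stdB i) i = 0

/-- Derivation property for a map `D`. -/
def IsDeriv (br : V7 → V7 → V7) (D : V7 → V7) : Prop :=
  ∀ x y : V7, D (br x y) = br (D x) y + br x (D y)

/-- Derived series of a bracket. -/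
def derSeries (br : V7 → V7 → V7) : ℕ → Submodule ℝ V7
  | 0 => ⊤
  | n + 1 => Submodule.span ℝ
      {z | ∃ x ∈ derSeries br n, ∃ y ∈ derSeries br n, z = br x y}

/-- Solvability: the derived series terminates at zero. -/
def Solvable (br : V7 → V7 → V7) : Prop := ∃ n, derSeries br n = ⊥

/-- Real cube root (the real root, also for negative arguments). -/
noncomputable def cbrt (x : ℝ) : ℝ :=
  if x < 0 then -((-x) ^ ((1 : ℝ) / 3)) else x ^ ((1 : ℝ) / 3)

/-- The standard volume form `e^{1234567}`. -/
def vol7 : Form 7 := eB ![0, 1, 2, 3, 4, 5, 6]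

end G2Solitons

namespace G2Solitons

noncomputable section

/-- The bracket of the Lie algebra `𝔥` with structure equations
`(0, 0, -e³⁷, e⁴⁷, 2 e¹⁴ + e⁵⁷, -2 e²⁴ + e⁶⁷, 0)`,
via the convention `dα(x,y) = -α([x,y])`. -/
def brH : V7 → V7 → V7 := fun x y =>
  ![0,
    0,
    x 2 * y 6 - x 6 * y 2,
    -(x 3 * y 6 - x 6 * y 3),
    -2 * (x 0 * y 3 - x 3 * y 0) - (x 4 * y 6 - x 6 * y 4),
    2 * (x 1 * y 3 - x 3 * y 1) - (x 5 * y 6 - x 6 * y 5),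
    0]

/-- `φ = e¹²⁷ + e³⁴⁷ + e⁵⁶⁷ + e¹³⁵ - e¹⁴⁶ - e²³⁶ - e²⁴⁵`. -/
def phiH : Form 3 := fun v =>
  eB ![0, 1, 6] v + eB ![2, 3, 6] v + eB ![4, 5, 6] v
    + eB ![0, 2, 4] v - eB ![0, 3, 5] v - eB ![1, 2, 5] v - eB ![1, 3, 4] v

/-- The standard Euclidean metric `g_φ = ∑_{i=1}^{7} (e^i)²`. -/
def gH (u v : V7) : ℝ := ∑ i : Fin 7, u i * v i

/-- `τ = 2 e¹² + 2 e³⁴ - 4 e⁵⁶`. -/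
def tauH : Form 2 := fun v =>
  2 * eB ![0, 1] v + 2 * eB ![2, 3] v - 4 * eB ![4, 5] v

/-- `D = diag(0, 0, -4, 4, 4, 4, 0)`. -/
def DH : V7 → V7 := fun x i => (![0, 0, -4, 4, 4, 4, 0] : Fin 7 → ℝ) i * x i

end

end G2Solitons

/-!
The derivation `D̃` can be taken to be `D` itself. Since `D` is diagonal with weights
`(0, 0, -4, 4, 4, 4, 0)`, it is a derivation because every nonzero structure constant
`cᵢⱼᵏ` satisfies `dₖ = dᵢ + dⱼ`. Expanding `dτ` and `D.φ` on three vectors into three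
terms each, the identity `dτ = D.φ` becomes a polynomial identity in the 21 coordinates.
-/

namespace G2Solitons

theorem DH_eq_toLin'_diagonal : DH = ⇑(Matrix.toLin' (Matrix.diagonal ![0, 0, -4, 4, 4, 4, 0])) := by
  funext x i
  simp [DH, Matrix.mulVec_diagonal]

theorem isDeriv_brH_DH : IsDeriv brH DH := by
  intro x y
  funext i
  fin_cases i <;> simp [brH, DH] <;> ring

theorem fin_cons_eq_vecCons {α : Type*} (a : α) (f : Fin 1 → α) : Fin.cons a f = ![a, f 0] := by
  funext i; fin_cases i <;> rfl

theorem actD_apply_three (D : V7 → V7) (α : Form 3) (w : Fin 3 → V7) :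
    actD D α w = α ![D (w 0), w 1, w 2] + α ![w 0, D (w 1), w 2] + α ![w 0, w 1, D (w 2)] := by
  have h0 : Function.update w 0 (D (w 0)) = ![D (w 0), w 1, w 2] := by
    funext i; fin_cases i <;> simp
  have h1 : Function.update w 1 (D (w 1)) = ![w 0, D (w 1), w 2] := by
    funext i; fin_cases i <;> simp
  have h2 : Function.update w 2 (D (w 2)) = ![w 0, w 1, D (w 2)] := by
    funext i; fin_cases i <;> simp
  simp [actD, Fin.sum_univ_three, h0, h1, h2]

theorem dCE_apply_three (br : V7 → V7 → V7) (α : Form 2) (w : Fin 3 → V7) :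
    dCE br α w = -α ![br (w 0) (w 1), w 2] + α ![br (w 0) (w 2), w 1]
      - α ![br (w 1) (w 2), w 0] := by
  simp only [dCE]
  rw [Fin.sum_univ_three, Fin.sum_univ_three, Fin.sum_univ_three, Fin.sum_univ_three]
  norm_num [fin_cons_eq_vecCons, show (⟨2, by norm_num⟩ : Fin 3) = 2 from rfl]
  ring

theorem dCE_brH_tauH : dCE brH tauH = actD DH phiH := by
  funext w
  rw [dCE_apply_three, actD_apply_three]
  simp only [tauH, phiH, eB, brH, DH, Matrix.det_fin_two, Matrix.det_fin_three,
    Matrix.of_apply, Matrix.cons_val]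
  ring

/-- `D = diag(0,0,-4,4,4,4,0)` is a derivation of `𝔥`, and
`dτ = D̃.φ` for some derivation `D̃`, i.e. `φ` is a steady algebraic Laplacian soliton. -/
theorem steady_soliton_H :
    IsDeriv brH DH ∧
    ∃ D : V7 →ₗ[ℝ] V7, IsDeriv brH (⇑D) ∧
      ∀ w, dCE brH tauH w = actD (⇑D) phiH w := by
  refine ⟨isDeriv_brH_DH, Matrix.toLin' (Matrix.diagonal ![0, 0, -4, 4, 4, 4, 0]), ?_, ?_⟩ <;>
    rw [← DH_eq_toLin'_diagonal]
  · exact isDeriv_brH_DH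
  · exact congrFun dCE_brH_tauH

end G2Solitons
end

section
/- Let 𝔥 be the Lie algebra on ℝ⁷ with structure equations de¹ = 0, de² = 0, de³ = −e³⁷, de⁴ = e⁴⁷, de⁵ = 2 e¹⁴ + e⁵⁷, de⁶ = −2 e²⁴ + e⁶⁷, de⁷ = 0, let φ = e¹²⁷ + e³⁴⁷ + e⁵⁶⁷ + e¹³⁵ − e¹⁴⁶ − e²³⁶ − e²⁴⁵, and let τ = 2 e¹² + 2 e³⁴ − 4 e⁵⁶. Then for the vector X = −4 e₇ ∈ 𝔥 one has d(ι_X φ) = dτ = −8(e¹⁴⁶ + e²⁴⁵ − e⁵⁶⁷). Hence the steady soliton φ satisfies Δ_φφ = L_Xφ for a left-invariant vector field X on the simply connected solvable Lie group with Lie algebra 𝔥. -/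
/-!
Common framework: unbundled exterior forms on ℝ⁷, wedge product, interior product,
Chevalley–Eilenberg differential of a Lie bracket, induced inner products on forms,
derived series, and the Lie algebras / G₂-structures from the paper
"Laplacian flow solitons on non-solvable Lie groups" (Fino–Raffero).
-/

open scoped BigOperators

/-!
Since `X = -4 e₇` and `e₇` occurs in `φ` only through `e¹²⁷ + e³⁴⁷ + e⁵⁶⁷`, one has
`ι_Xφ = -4 (e¹² + e³⁴ + e⁵⁶)`, while `τ = 2 e¹² + 2 e³⁴ - 4 e⁵⁶`. In `𝔥` the forms `e¹²` and `e³⁴`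
are closed and `d e⁵⁶ = 2 (e¹⁴⁶ + e²⁴⁵ - e⁵⁶⁷)`, so both `d(ι_Xφ)` and `dτ` equal
`-8 (e¹⁴⁶ + e²⁴⁵ - e⁵⁶⁷)`.
-/

namespace G2Solitons

section Differential

variable {k : ℕ} (br : V7 → V7 → V7)

theorem dCE_add (α β : Form (k + 1)) : dCE br (α + β) = dCE br α + dCE br β := by
  funext v
  simp only [dCE, Pi.add_apply, ← Finset.sum_add_distrib]
  refine Finset.sum_congr rfl fun i _ => Finset.sum_congr rfl fun j _ => ?_
  split_ifs <;> ring

theorem dCE_smul (c : ℝ) (α : Form (k + 1)) : dCE br (c • α) = c • dCE br α := by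
  funext v
  simp only [dCE, Pi.smul_apply, smul_eq_mul, Finset.mul_sum]
  refine Finset.sum_congr rfl fun i _ => Finset.sum_congr rfl fun j _ => ?_
  split_ifs <;> ring

theorem dCE_sub (α β : Form (k + 1)) : dCE br (α - β) = dCE br α - dCE br β := by
  rw [sub_eq_add_neg, ← neg_one_smul ℝ β, dCE_add, dCE_smul, neg_one_smul, ← sub_eq_add_neg]

theorem dCE_two_apply (α : Form 2) (w : Fin 3 → V7) :
    dCE br α w = -α ![br (w 0) (w 1), w 2] + α ![br (w 0) (w 2), w 1]
      - α ![br (w 1) (w 2), w 0] := by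
  have cons_eq (u : V7) (f : Fin 1 → V7) : Fin.cons u f = ![u, f 0] := by
    funext x; refine Fin.cases ?_ ?_ x <;> simp [Fin.fin_one_eq_zero]
  simp only [dCE, Nat.reduceAdd, Fin.val_fin_lt, Fin.val_eq_zero, Fin.val_pos_iff, Fin.isValue,
    Fin.zero_eta, zero_add, Fin.mk_one, Fin.reduceFinMk, cons_eq, Fin.sum_univ_succ, not_lt_zero,
    ↓reduceIte, Fin.val_succ, lt_add_iff_pos_left, Fin.succ_zero_eq_one, Fin.lt_one_iff,
    Fin.coe_ofNat_eq_mod, Nat.zero_mod, lt_self_iff_false, Finset.univ_unique, Fin.default_eq_zero,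
    Fin.succ_pos, Finset.sum_singleton, Fin.succ_one_eq_two, pow_one, neg_mul, one_mul,
    Fin.reduceLT, even_two, Even.neg_pow, one_pow, Fin.succ_ne_zero, add_zero]
  ring

end Differential

theorem iprod_three_apply (u : V7) (α : Form 3) (v : Fin 2 → V7) :
    iprod u α v = α ![u, v 0, v 1] := by
  unfold iprod
  congr
  funext i
  fin_cases i <;> rfl

theorem iprod_phiH :
    iprod ((-4 : ℝ) • stdB 6) phiH = (-4 : ℝ) • (eB ![0, 1] + eB ![2, 3] + eB ![4, 5]) := by
  funext v
  simp only [Fin.isValue, neg_smul, iprod_three_apply, phiH, eB, Nat.succ_eq_add_one,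
    Nat.reduceAdd, Matrix.cons_val', Pi.neg_apply, Pi.smul_apply, stdB, smul_eq_mul, mul_ite,
    mul_one, mul_zero, Matrix.cons_val_fin_one, Matrix.det_fin_three, Matrix.of_apply,
    Matrix.cons_val_zero, Fin.reduceEq, ↓reduceIte, neg_zero, Matrix.cons_val_one, zero_mul,
    Matrix.cons_val, sub_self, add_zero, neg_mul, zero_add, sub_neg_eq_add, sub_zero, Pi.add_apply,
    Matrix.det_fin_two]
  ring

theorem tauH_eq : tauH = (2 : ℝ) • eB ![0, 1] + (2 : ℝ) • eB ![2, 3] - (4 : ℝ) • eB ![4, 5] :=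
  rfl

theorem dCE_brH_e12 : dCE brH (eB ![0, 1]) = 0 := by
  funext w
  simp [dCE_two_apply, eB, Matrix.det_fin_two, brH]

theorem dCE_brH_e34 : dCE brH (eB ![2, 3]) = 0 := by
  funext w
  simp only [Nat.succ_eq_add_one, Nat.reduceAdd, Fin.isValue, dCE_two_apply, eB, brH, neg_sub,
    neg_mul, Matrix.cons_val', Matrix.cons_val_fin_one, Matrix.det_fin_two, Matrix.of_apply,
    Matrix.cons_val_zero, Matrix.cons_val, Matrix.cons_val_one, Pi.zero_apply]
  ring

theorem dCE_brH_e56 :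
    dCE brH (eB ![4, 5]) = (2 : ℝ) • (eB ![0, 3, 5] + eB ![1, 3, 4] - eB ![4, 5, 6]) := by
  funext w
  simp only [Nat.succ_eq_add_one, Nat.reduceAdd, Fin.isValue, dCE_two_apply, eB, brH, neg_sub,
    neg_mul, Matrix.cons_val', Matrix.cons_val_fin_one, Matrix.det_fin_two, Matrix.of_apply,
    Matrix.cons_val_zero, Matrix.cons_val, Matrix.cons_val_one, Pi.smul_apply, Pi.sub_apply,
    Pi.add_apply, Matrix.det_fin_three, smul_eq_mul]
  ring

/-- for the left-invariant vector field `X = -4e₇` one has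
`d(ι_Xφ) = dτ = -8(e¹⁴⁶ + e²⁴⁵ - e⁵⁶⁷)`, so `Δ_φφ = L_Xφ`. -/
theorem steady_soliton_H_invariant_field :
    (∀ w, dCE brH (iprod ((-4 : ℝ) • stdB 6) phiH) w = dCE brH tauH w) ∧
    ∀ w, dCE brH tauH w
      = -8 * (eB ![0, 3, 5] w + eB ![1, 3, 4] w - eB ![4, 5, 6] w) := by
  have d_tau : dCE brH tauH = (-8 : ℝ) • (eB ![0, 3, 5] + eB ![1, 3, 4] - eB ![4, 5, 6]) := by
    rw [tauH_eq, dCE_sub, dCE_add, dCE_smul, dCE_smul, dCE_smul, dCE_brH_e12, dCE_brH_e34,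
      dCE_brH_e56]
    module
  have d_iota_phi : dCE brH (iprod ((-4 : ℝ) • stdB 6) phiH) = dCE brH tauH := by
    rw [iprod_phiH, dCE_smul, dCE_add, dCE_add, dCE_brH_e12, dCE_brH_e34, dCE_brH_e56, d_tau]
    module
  exact ⟨congrFun d_iota_phi, fun w => congrFun d_tau w⟩

end G2Solitons
end
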